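/- arXiv:2310.14046 — 7 statements merged into one kernel-verified Lean document; each statement's English description precedes it below -/
import Mathlib

section
/- Let V be a real inner product space, z ∈ V with ⟨z,z⟩ > 0, p ∈ [0,1], and let X₀, …, Xₙ ∈ V satisfy cov_p(Xᵢ, Xⱼ; z) = 0 for all i ≠ j and var_p(Xⱼ; z) > 0 for all j, where cov_p(x,y;z) = ⟨x,y⟩ - p·⟨x,z⟩·⟨y,z⟩/⟨z,z⟩. Then X₀, …, Xₙ are linearly independent. -/
open RealInnerProductSpace

/-- The p-covariance of `x` and `y` with respect to the fixed element `z`. -/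
noncomputable def pCov {V : Type*} [NormedAddCommGroup V] [InnerProductSpace ℝ V]
    (p : ℝ) (z x y : V) : ℝ :=
  ⟪x, y⟫ - p * ⟪x, z⟫ * ⟪y, z⟫ / ⟪z, z⟫

/-- The p-variance of `x` with respect to the fixed element `z`. -/
noncomputable def pVar {V : Type*} [NormedAddCommGroup V] [InnerProductSpace ℝ V]
    (p : ℝ) (z x : V) : ℝ :=
  pCov p z x x

/-!
The p-covariance is a bilinear form, so a p-uncorrelated family with nonzero p-variances is an
orthogonal family of anisotropic vectors for it, and such families are linearly independent.
-/

section

variable {V : Type*} [NormedAddCommGroup V] [InnerProductSpace ℝ V]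

noncomputable def pCovForm (p : ℝ) (z : V) : LinearMap.BilinForm ℝ V :=
  innerₗ V - (p / ⟪z, z⟫) • LinearMap.BilinForm.linMulLin ((innerₗ V).flip z) ((innerₗ V).flip z)

@[simp]
theorem pCovForm_apply (p : ℝ) (z x y : V) : pCovForm p z x y = pCov p z x y := by
  simp only [pCovForm, pCov, LinearMap.sub_apply, LinearMap.smul_apply,
    LinearMap.BilinForm.linMulLin_apply, LinearMap.flip_apply, innerₗ_apply_apply, smul_eq_mul]
  ring

end

theorem pUncorrelated_linearIndependent_general
    {V : Type*} [NormedAddCommGroup V] [InnerProductSpace ℝ V]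
    (z : V)
    (p : ℝ)
    (n : ℕ) (X : Fin (n + 1) → V)
    (huncorr : ∀ i j, i ≠ j → pCov p z (X i) (X j) = 0)
    (hvar : ∀ j, 0 < pVar p z (X j)) :
    LinearIndependent ℝ X :=
  LinearMap.linearIndependent_of_isOrthoᵢ (B := pCovForm p z)
    (fun i j hij => by simpa using huncorr i j hij) (fun j => by simpa [pVar] using (hvar j).ne')

theorem pUncorrelated_linearIndependent
    {V : Type*} [NormedAddCommGroup V] [InnerProductSpace ℝ V]
    (z : V) (hz : (0:ℝ) < ⟪z, z⟫)
    (p : ℝ) (hp0 : 0 ≤ p) (hp1 : p ≤ 1)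
    (n : ℕ) (X : Fin (n + 1) → V)
    (huncorr : ∀ i j, i ≠ j → pCov p z (X i) (X j) = 0)
    (hvar : ∀ j, 0 < pVar p z (X j)) :
    LinearIndependent ℝ X :=
  pUncorrelated_linearIndependent_general z p n X huncorr hvar
end

section
/- Let V be a real inner product space, z ∈ V with ⟨z,z⟩ > 0, p ∈ [0,1], and let X₀, …, Xₙ ∈ V be pairwise p-uncorrelated with respect to z with var_p(Xₖ; z) > 0 for each k. Then for any Y ∈ V: var_p(Y - Σₖ (cov_p(Xₖ,Y;z)/var_p(Xₖ;z))·Xₖ ; z) = var_p(Y;z) - Σₖ cov_p(Xₖ,Y;z)²/var_p(Xₖ;z). -/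
open RealInnerProductSpace

section aux
variable {V : Type*} [NormedAddCommGroup V] [InnerProductSpace ℝ V] (p : ℝ) (z : V)

lemma pCov_comm (x y : V) : pCov p z x y = pCov p z y x := by
  simp [pCov, real_inner_comm x y]; ring

lemma pCov_sub_left (x y w : V) :
    pCov p z (x - y) w = pCov p z x w - pCov p z y w := by
  simp [pCov, inner_sub_left]; ring

lemma pCov_smul_left (c : ℝ) (x w : V) :
    pCov p z (c • x) w = c * pCov p z x w := by
  simp [pCov, inner_smul_left]; ring

lemma pCov_sum_left {ι : Type*} (s : Finset ι) (f : ι → V) (w : V) :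
    pCov p z (∑ i ∈ s, f i) w = ∑ i ∈ s, pCov p z (f i) w := by
  simp only [pCov, sum_inner]
  rw [Finset.mul_sum, Finset.sum_mul, Finset.sum_div, Finset.sum_sub_distrib]

lemma pCov_sub_right (x y w : V) :
    pCov p z x (y - w) = pCov p z x y - pCov p z x w := by
  rw [pCov_comm, pCov_sub_left, pCov_comm p z y x, pCov_comm p z w x]

end aux

theorem pVar_remainder_formula
    {V : Type*} [NormedAddCommGroup V] [InnerProductSpace ℝ V]
    (z : V) (hz : (0:ℝ) < ⟪z, z⟫)
    (p : ℝ) (hp0 : 0 ≤ p) (hp1 : p ≤ 1)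
    (n : ℕ) (X : Fin (n + 1) → V)
    (huncorr : ∀ i j, i ≠ j → pCov p z (X i) (X j) = 0)
    (hvar : ∀ k, 0 < pVar p z (X k))
    (Y : V) :
    pVar p z (Y - ∑ k, (pCov p z (X k) Y / pVar p z (X k)) • X k)
      = pVar p z Y - ∑ k, pCov p z (X k) Y ^ 2 / pVar p z (X k) := by
  set c : Fin (n+1) → ℝ := fun k => pCov p z (X k) Y / pVar p z (X k) with hc
  have hcS : ∀ w : V, pCov p z (∑ k, c k • X k) w = ∑ k, c k * pCov p z (X k) w := by
    intro w
    rw [pCov_sum_left]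
    exact Finset.sum_congr rfl fun i _ => pCov_smul_left p z _ _ _
  have hSY : pCov p z (∑ k, c k • X k) Y = ∑ k, pCov p z (X k) Y ^ 2 / pVar p z (X k) := by
    rw [hcS]
    refine Finset.sum_congr rfl fun i _ => ?_
    have := (hvar i).ne'
    field_simp [hc]
    rw [hc, div_mul_eq_mul_div, div_mul_cancel₀ _ this]
    ring
  have hSS : pCov p z (∑ k, c k • X k) (∑ k, c k • X k)
      = ∑ k, pCov p z (X k) Y ^ 2 / pVar p z (X k) := by
    rw [hcS]
    have : ∀ i : Fin (n+1), c i * pCov p z (X i) (∑ k, c k • X k)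
        = pCov p z (X i) Y ^ 2 / pVar p z (X i) := by
      intro i
      rw [pCov_comm, hcS]
      rw [Finset.sum_eq_single i]
      · have := (hvar i).ne'
        rw [pCov_comm p z (X i) (X i)]
        show c i * (c i * pVar p z (X i)) = _
        field_simp [hc]
        rw [hc, div_pow, div_mul_cancel₀ _ (pow_ne_zero 2 this)]
      · intro j _ hj
        rw [huncorr j i hj, mul_zero]
      · simp
    simp_rw [this]
  have expand : pVar p z (Y - ∑ k, c k • X k)
      = pVar p z Y - pCov p z (∑ k, c k • X k) Y - pCov p z Y (∑ k, c k • X k)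
        + pCov p z (∑ k, c k • X k) (∑ k, c k • X k) := by
    unfold pVar
    rw [pCov_sub_left, pCov_sub_right, pCov_sub_right]
    ring
  rw [expand, pCov_comm p z Y, hSY, hSS]
  ring
end

section
/- Let V be a real inner product space, z ∈ V with ⟨z,z⟩ > 0, p ∈ [0,1], and let X₀, …, Xₙ ∈ V be pairwise p-uncorrelated with respect to z with var_p(Xₖ; z) > 0 for each k. Then for any Y ∈ V with var_p(Y;z) > 0: Σₖ ρ_p(Xₖ,Y;z)² ≤ 1, where ρ_p(X,Y;z) = cov_p(X,Y;z)/√(var_p(X;z)·var_p(Y;z)). -/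
open RealInnerProductSpace

/-- The p-correlation coefficient of `x` and `y` with respect to the fixed element `z`. -/
noncomputable def pCorr {V : Type*} [NormedAddCommGroup V] [InnerProductSpace ℝ V]
    (p : ℝ) (z x y : V) : ℝ :=
  pCov p z x y / Real.sqrt (pVar p z x * pVar p z y)

theorem pCorr_sq_sum_le_one
    {V : Type*} [NormedAddCommGroup V] [InnerProductSpace ℝ V]
    (z : V) (hz : (0:ℝ) < ⟪z, z⟫)
    (p : ℝ) (hp0 : 0 ≤ p) (hp1 : p ≤ 1)
    (n : ℕ) (X : Fin (n + 1) → V)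
    (huncorr : ∀ i j, i ≠ j → pCov p z (X i) (X j) = 0)
    (hvar : ∀ k, 0 < pVar p z (X k))
    (Y : V) (hY : 0 < pVar p z Y) :
    ∑ k, pCorr p z (X k) Y ^ 2 ≤ 1 := by
  classical
  set t : ℝ := 1 - Real.sqrt (1 - p) with ht
  have hsq : Real.sqrt (1 - p) ^ 2 = 1 - p := Real.sq_sqrt (by linarith)
  set T : V → V := fun x => x - ((t / ⟪z, z⟫) * ⟪x, z⟫) • z with hT
  have key : ∀ x y : V, ⟪T x, T y⟫ = pCov p z x y := by
    intro x y
    simp only [hT, pCov, inner_sub_left, inner_sub_right, real_inner_smul_left,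
      real_inner_smul_right]
    rw [real_inner_comm z x]
    have hzz : ⟪z, z⟫ ≠ 0 := hz.ne'
    have h2t : 2 * t - t ^ 2 = p := by rw [ht]; nlinarith [hsq]
    rw [real_inner_comm z y, real_inner_comm y z] at *
    field_simp
    linear_combination (⟪z, x⟫ * ⟪y, z⟫ : ℝ) * h2t + 2 * (⟪z, x⟫ * ⟪y, z⟫ : ℝ) * hsq
  have keyVar : ∀ x : V, ‖T x‖ ^ 2 = pVar p z x := by
    intro x
    rw [← real_inner_self_eq_norm_sq]
    exact key x x
  have hTX : ∀ k, ‖T (X k)‖ ≠ 0 := by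
    intro k h
    have := keyVar (X k)
    rw [h] at this
    simpa [← this] using hvar k
  set e : Fin (n + 1) → V := fun k => (‖T (X k)‖)⁻¹ • T (X k) with he
  have horth : Orthonormal ℝ e := by
    rw [orthonormal_iff_ite]
    intro i j
    simp only [he, real_inner_smul_left, real_inner_smul_right, key]
    by_cases hij : i = j
    · subst hij
      have : pCov p z (X i) (X i) = ‖T (X i)‖ ^ 2 := (keyVar (X i)).symm
      rw [this]
      field_simp [hTX i]
      simp
    · simp [hij, huncorr i j hij]
  have bessel := horth.sum_inner_products_le (s := Finset.univ) (T Y)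
  have hb : ∑ k, (pCov p z (X k) Y) ^ 2 / pVar p z (X k) ≤ pVar p z Y := by
    rw [← keyVar Y]
    refine le_trans (le_of_eq ?_) bessel
    apply Finset.sum_congr rfl
    intro k _
    have hk := hTX k
    rw [he]
    simp only [real_inner_smul_left, key, Real.norm_eq_abs, sq_abs]
    rw [mul_pow, ← keyVar (X k)]
    rw [div_eq_mul_inv, mul_comm]
    congr 1
    rw [← inv_pow]
  have hfinal : ∀ k, pCorr p z (X k) Y ^ 2 =
      (pCov p z (X k) Y) ^ 2 / pVar p z (X k) / pVar p z Y := by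
    intro k
    rw [pCorr, div_pow, Real.sq_sqrt (mul_nonneg (hvar k).le hY.le), div_div]
  calc ∑ k, pCorr p z (X k) Y ^ 2
      = (∑ k, (pCov p z (X k) Y) ^ 2 / pVar p z (X k)) / pVar p z Y := by
        rw [Finset.sum_div]; exact Finset.sum_congr rfl fun k _ => hfinal k
    _ ≤ 1 := by
        rw [div_le_one hY]; exact hb
end

section
/- Let X, Z be real random variables on a probability space with E(Z²) > 0, and suppose m·Z ≤ X ≤ M·Z pointwise for real constants m ≤ M. Then E(X²) - E(XZ)²/E(Z²) ≤ (1/E(Z²))·(M·E(Z²) - E(XZ))·(E(XZ) - m·E(Z²)) ≤ (E(Z²)/4)·(M - m)². -/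
/-!
Expanding `(M Z - X)(X - m Z)` shows that the gap between the two sides of the first inequality
is `E((M Z - X)(X - m Z))`, which is nonnegative because both factors are. The second inequality
is AM-GM `4 a b ≤ (a + b)²` for `a = M E(Z²) - E(XZ)` and `b = E(XZ) - m E(Z²)`, whose sum is
`(M - m) E(Z²)`.
-/

open MeasureTheory

section Algebra

variable {A B C m M : ℝ}

lemma sub_sq_div_le_one_div_mul_of_nonneg (hC : C ≠ 0) (h : 0 ≤ (M + m) * B - A - m * M * C) :
    A - B ^ 2 / C ≤ 1 / C * ((M * C - B) * (B - m * C)) := by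
  have hgap : 1 / C * ((M * C - B) * (B - m * C)) - (A - B ^ 2 / C)
      = (M + m) * B - A - m * M * C := by
    field_simp
    ring
  linarith

lemma one_div_mul_sub_mul_sub_le (hC : 0 < C) :
    1 / C * ((M * C - B) * (B - m * C)) ≤ C / 4 * (M - m) ^ 2 := by
  have amgm := four_mul_le_sq_add (M * C - B) (B - m * C)
  calc 1 / C * ((M * C - B) * (B - m * C))
      ≤ 1 / C * ((M * C - B + (B - m * C)) ^ 2 / 4) := by gcongr; linarith
    _ = C / 4 * (M - m) ^ 2 := by field_simp; ring

end Algebra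

section Integral

variable {Ω : Type*} [MeasurableSpace Ω] {μ : Measure Ω} {X Z : Ω → ℝ}

lemma integral_sub_mul_sub_eq (m M : ℝ) (hX2 : Integrable (fun ω => X ω * X ω) μ)
    (hXZ : Integrable (fun ω => X ω * Z ω) μ) (hZ2 : Integrable (fun ω => Z ω * Z ω) μ) :
    ∫ ω, (M * Z ω - X ω) * (X ω - m * Z ω) ∂μ
      = (M + m) * (∫ ω, X ω * Z ω ∂μ) - (∫ ω, X ω * X ω ∂μ) - m * M * ∫ ω, Z ω * Z ω ∂μ := by
  have hexpand : (fun ω => (M * Z ω - X ω) * (X ω - m * Z ω))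
      = fun ω => (M + m) * (X ω * Z ω) - X ω * X ω - m * M * (Z ω * Z ω) := by
    funext ω
    ring
  have hlinear : Integrable (fun ω => (M + m) * (X ω * Z ω) - X ω * X ω) μ :=
    (hXZ.const_mul _).sub hX2
  rw [hexpand, integral_sub hlinear (hZ2.const_mul _), integral_sub (hXZ.const_mul _) hX2,
    integral_const_mul, integral_const_mul]

lemma integral_sub_mul_sub_nonneg {m M : ℝ} (hX2 : Integrable (fun ω => X ω * X ω) μ)
    (hXZ : Integrable (fun ω => X ω * Z ω) μ) (hZ2 : Integrable (fun ω => Z ω * Z ω) μ)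
    (hlb : ∀ ω, m * Z ω ≤ X ω) (hub : ∀ ω, X ω ≤ M * Z ω) :
    0 ≤ (M + m) * (∫ ω, X ω * Z ω ∂μ) - (∫ ω, X ω * X ω ∂μ) - m * M * ∫ ω, Z ω * Z ω ∂μ := by
  rw [← integral_sub_mul_sub_eq m M hX2 hXZ hZ2]
  exact integral_nonneg fun ω => mul_nonneg (sub_nonneg.2 (hub ω)) (sub_nonneg.2 (hlb ω))

end Integral

theorem one_variance_upper_bound_general
    {Ω : Type*} [MeasurableSpace Ω] (μ : Measure Ω)
    (X Z : Ω → ℝ) (m M : ℝ)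
    (hX2 : Integrable (fun ω => X ω * X ω) μ)
    (hXZ : Integrable (fun ω => X ω * Z ω) μ)
    (hZ2 : Integrable (fun ω => Z ω * Z ω) μ)
    (hZpos : 0 < ∫ ω, Z ω * Z ω ∂μ)
    (hlb : ∀ ω, m * Z ω ≤ X ω) (hub : ∀ ω, X ω ≤ M * Z ω) :
    (∫ ω, X ω * X ω ∂μ) - (∫ ω, X ω * Z ω ∂μ) ^ 2 / (∫ ω, Z ω * Z ω ∂μ)
        ≤ (1 / ∫ ω, Z ω * Z ω ∂μ) *
            ((M * (∫ ω, Z ω * Z ω ∂μ) - ∫ ω, X ω * Z ω ∂μ) *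
              ((∫ ω, X ω * Z ω ∂μ) - m * ∫ ω, Z ω * Z ω ∂μ)) ∧
      (1 / ∫ ω, Z ω * Z ω ∂μ) *
          ((M * (∫ ω, Z ω * Z ω ∂μ) - ∫ ω, X ω * Z ω ∂μ) *
            ((∫ ω, X ω * Z ω ∂μ) - m * ∫ ω, Z ω * Z ω ∂μ))
        ≤ ((∫ ω, Z ω * Z ω ∂μ) / 4) * (M - m) ^ 2 :=
  ⟨sub_sq_div_le_one_div_mul_of_nonneg hZpos.ne'
      (integral_sub_mul_sub_nonneg hX2 hXZ hZ2 hlb hub),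
    one_div_mul_sub_mul_sub_le hZpos⟩

theorem one_variance_upper_bound
    {Ω : Type*} [MeasurableSpace Ω] (μ : Measure Ω) [IsProbabilityMeasure μ]
    (X Z : Ω → ℝ) (m M : ℝ) (hmM : m ≤ M)
    (hX2 : Integrable (fun ω => X ω * X ω) μ)
    (hXZ : Integrable (fun ω => X ω * Z ω) μ)
    (hZ2 : Integrable (fun ω => Z ω * Z ω) μ)
    (hZpos : 0 < ∫ ω, Z ω * Z ω ∂μ)
    (hlb : ∀ ω, m * Z ω ≤ X ω) (hub : ∀ ω, X ω ≤ M * Z ω) :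
    (∫ ω, X ω * X ω ∂μ) - (∫ ω, X ω * Z ω ∂μ) ^ 2 / (∫ ω, Z ω * Z ω ∂μ)
        ≤ (1 / ∫ ω, Z ω * Z ω ∂μ) *
            ((M * (∫ ω, Z ω * Z ω ∂μ) - ∫ ω, X ω * Z ω ∂μ) *
              ((∫ ω, X ω * Z ω ∂μ) - m * ∫ ω, Z ω * Z ω ∂μ)) ∧
      (1 / ∫ ω, Z ω * Z ω ∂μ) *
          ((M * (∫ ω, Z ω * Z ω ∂μ) - ∫ ω, X ω * Z ω ∂μ) *
            ((∫ ω, X ω * Z ω ∂μ) - m * ∫ ω, Z ω * Z ω ∂μ))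
        ≤ ((∫ ω, Z ω * Z ω ∂μ) / 4) * (M - m) ^ 2 :=
  one_variance_upper_bound_general μ X Z m M hX2 hXZ hZ2 hZpos hlb hub
end

section
/- Let X, Y, Z be real random variables with E(Z²) > 0, and suppose m_X·Z ≤ X ≤ M_X·Z and m_Y·Z ≤ Y ≤ M_Y·Z pointwise for real constants m_X ≤ M_X and m_Y ≤ M_Y. Then |E(XY) - E(XZ)·E(YZ)/E(Z²)| ≤ (E(Z²)/4)·(M_X - m_X)·(M_Y - m_Y). -/
open MeasureTheory

theorem one_covariance_gruss_bound
    {Ω : Type*} [MeasurableSpace Ω] (μ : Measure Ω) [IsProbabilityMeasure μ]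
    (X Y Z : Ω → ℝ) (mX MX mY MY : ℝ) (hX : mX ≤ MX) (hY : mY ≤ MY)
    (hXY : Integrable (fun ω => X ω * Y ω) μ)
    (hXZ : Integrable (fun ω => X ω * Z ω) μ)
    (hYZ : Integrable (fun ω => Y ω * Z ω) μ)
    (hX2 : Integrable (fun ω => X ω * X ω) μ)
    (hY2 : Integrable (fun ω => Y ω * Y ω) μ)
    (hZ2 : Integrable (fun ω => Z ω * Z ω) μ)
    (hZpos : 0 < ∫ ω, Z ω * Z ω ∂μ)
    (hlbX : ∀ ω, mX * Z ω ≤ X ω) (hubX : ∀ ω, X ω ≤ MX * Z ω)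
    (hlbY : ∀ ω, mY * Z ω ≤ Y ω) (hubY : ∀ ω, Y ω ≤ MY * Z ω) :
    |(∫ ω, X ω * Y ω ∂μ) -
        (∫ ω, X ω * Z ω ∂μ) * (∫ ω, Y ω * Z ω ∂μ) / (∫ ω, Z ω * Z ω ∂μ)|
      ≤ ((∫ ω, Z ω * Z ω ∂μ) / 4) * (MX - mX) * (MY - mY) := by
  set s := ∫ ω, Z ω * Z ω ∂μ with hs_def
  set a := ∫ ω, X ω * Z ω ∂μ with ha_def
  set b := ∫ ω, Y ω * Z ω ∂μ with hb_def
  set IXY := ∫ ω, X ω * Y ω ∂μ with hIXY_def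
  set IX2 := ∫ ω, X ω * X ω ∂μ with hIX2_def
  set IY2 := ∫ ω, Y ω * Y ω ∂μ with hIY2_def
  have hs : (0:ℝ) < s := hZpos
  -- linearity of the integral for combinations of the six basic products
  have lin : ∀ c1 c2 c3 c4 c5 c6 : ℝ,
      ∫ ω, (c1 * (X ω * X ω) + (c2 * (Y ω * Y ω) + (c3 * (Z ω * Z ω) +
        (c4 * (X ω * Y ω) + (c5 * (X ω * Z ω) + c6 * (Y ω * Z ω)))))) ∂μ
      = c1 * IX2 + (c2 * IY2 + (c3 * s + (c4 * IXY + (c5 * a + c6 * b)))) := by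
    intro c1 c2 c3 c4 c5 c6
    have i6 : Integrable (fun ω => c6 * (Y ω * Z ω)) μ := hYZ.const_mul c6
    have i56 : Integrable (fun ω => c5 * (X ω * Z ω) + c6 * (Y ω * Z ω)) μ :=
      (hXZ.const_mul c5).add i6
    have i456 : Integrable (fun ω => c4 * (X ω * Y ω) +
        (c5 * (X ω * Z ω) + c6 * (Y ω * Z ω))) μ := (hXY.const_mul c4).add i56
    have i3456 : Integrable (fun ω => c3 * (Z ω * Z ω) + (c4 * (X ω * Y ω) +
        (c5 * (X ω * Z ω) + c6 * (Y ω * Z ω)))) μ := (hZ2.const_mul c3).add i456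
    have i23456 : Integrable (fun ω => c2 * (Y ω * Y ω) + (c3 * (Z ω * Z ω) +
        (c4 * (X ω * Y ω) + (c5 * (X ω * Z ω) + c6 * (Y ω * Z ω))))) μ :=
      (hY2.const_mul c2).add i3456
    rw [integral_add (hX2.const_mul c1) i23456,
      integral_add (hY2.const_mul c2) i3456,
      integral_add (hZ2.const_mul c3) i456,
      integral_add (hXY.const_mul c4) i56,
      integral_add (hXZ.const_mul c5) i6,
      integral_const_mul, integral_const_mul, integral_const_mul, integral_const_mul,
      integral_const_mul, integral_const_mul]
  -- quadratic form nonnegativity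
  have quad : ∀ p q r : ℝ, 0 ≤ p ^ 2 * IX2 + (q ^ 2 * IY2 + (r ^ 2 * s +
      (2 * p * q * IXY + (2 * p * r * a + 2 * q * r * b)))) := by
    intro p q r
    rw [← lin]
    refine integral_nonneg fun ω => ?_
    simp only [Pi.zero_apply]
    nlinarith [sq_nonneg (p * X ω + q * Y ω + r * Z ω)]
  -- bounds from pointwise conditions
  have hEX2' : 0 ≤ -IX2 - MX * mX * s + (MX + mX) * a := by
    have hEX2 : 0 ≤ (-1 : ℝ) * IX2 + (0 * IY2 + ((-(MX * mX)) * s +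
        (0 * IXY + ((MX + mX) * a + 0 * b)))) := by
      rw [← lin]
      refine integral_nonneg fun ω => ?_
      simp only [Pi.zero_apply]
      nlinarith [mul_nonneg (sub_nonneg.2 (hubX ω)) (sub_nonneg.2 (hlbX ω))]
    linarith
  have hEY2' : 0 ≤ -IY2 - MY * mY * s + (MY + mY) * b := by
    have hEY2 : 0 ≤ (0 : ℝ) * IX2 + ((-1) * IY2 + ((-(MY * mY)) * s +
        (0 * IXY + (0 * a + (MY + mY) * b)))) := by
      rw [← lin]
      refine integral_nonneg fun ω => ?_
      simp only [Pi.zero_apply]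
      nlinarith [mul_nonneg (sub_nonneg.2 (hubY ω)) (sub_nonneg.2 (hlbY ω))]
    linarith
  set A := s * IX2 - a ^ 2 with hA_def
  set D := s * IY2 - b ^ 2 with hD_def
  set B := s * IXY - a * b with hB_def
  have hA0 : 0 ≤ A := by
    have h := quad s 0 (-a)
    have heq : s ^ 2 * IX2 + ((0:ℝ) ^ 2 * IY2 + ((-a) ^ 2 * s +
        (2 * s * 0 * IXY + (2 * s * (-a) * a + 2 * 0 * (-a) * b)))) = s * A := by
      rw [hA_def]; ring
    rw [heq] at h
    have h2 := div_nonneg h hs.le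
    rwa [mul_div_cancel_left₀ _ hs.ne'] at h2
  have hD0 : 0 ≤ D := by
    have h := quad 0 s (-b)
    have heq : (0:ℝ) ^ 2 * IX2 + (s ^ 2 * IY2 + ((-b) ^ 2 * s +
        (2 * 0 * s * IXY + (2 * 0 * (-b) * a + 2 * s * (-b) * b)))) = s * D := by
      rw [hD_def]; ring
    rw [heq] at h
    have h2 := div_nonneg h hs.le
    rwa [mul_div_cancel_left₀ _ hs.ne'] at h2
  -- discriminant argument
  have hquad : ∀ x : ℝ, 0 ≤ D * (x * x) + (2 * B) * x + A := by
    intro x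
    have h := quad s (x * s) (-(a + x * b))
    have heq : s ^ 2 * IX2 + ((x * s) ^ 2 * IY2 + ((-(a + x * b)) ^ 2 * s +
        (2 * s * (x * s) * IXY + (2 * s * (-(a + x * b)) * a +
          2 * (x * s) * (-(a + x * b)) * b))))
        = s * (D * (x * x) + (2 * B) * x + A) := by
      rw [hA_def, hB_def, hD_def]; ring
    rw [heq] at h
    have h2 := div_nonneg h hs.le
    rwa [mul_div_cancel_left₀ _ hs.ne'] at h2
  have hdisc : discrim D (2 * B) A ≤ 0 := discrim_le_zero hquad
  rw [discrim] at hdisc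
  have hBsq : B ^ 2 ≤ D * A := by nlinarith [hdisc]
  -- bounds on A and D
  have hAb : A ≤ (s * (MX - mX) / 2) ^ 2 := by
    rw [hA_def]
    nlinarith [sq_nonneg (a - s * (MX + mX) / 2),
      mul_le_mul_of_nonneg_left hEX2' hs.le]
  have hDb : D ≤ (s * (MY - mY) / 2) ^ 2 := by
    rw [hD_def]
    nlinarith [sq_nonneg (b - s * (MY + mY) / 2),
      mul_le_mul_of_nonneg_left hEY2' hs.le]
  set R := s ^ 2 * (MX - mX) * (MY - mY) / 4 with hR_def
  have hR0 : 0 ≤ R := by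
    rw [hR_def]
    have h1 : 0 ≤ MX - mX := sub_nonneg.2 hX
    have h2 : 0 ≤ MY - mY := sub_nonneg.2 hY
    have := sq_nonneg s
    positivity
  have hBR : |B| ≤ R := by
    have h2 : D * A ≤ (s * (MY - mY) / 2) ^ 2 * (s * (MX - mX) / 2) ^ 2 :=
      mul_le_mul hDb hAb hA0 (sq_nonneg _)
    have h3 : (s * (MY - mY) / 2) ^ 2 * (s * (MX - mX) / 2) ^ 2 = R ^ 2 := by
      rw [hR_def]; ring
    have h1 : B ^ 2 ≤ R ^ 2 := hBsq.trans (h3 ▸ h2)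
    exact abs_le.mpr (abs_le_of_sq_le_sq' h1 hR0)
  -- conclude
  have key : IXY - a * b / s = B / s := by
    rw [hB_def]; field_simp
  rw [key, abs_div, abs_of_pos hs, div_le_iff₀ hs]
  calc |B| ≤ R := hBR
    _ = s / 4 * (MX - mX) * (MY - mY) * s := by rw [hR_def]; ring
end

section
/- For all nonnegative integers n and m with m ≤ n, Σ_{k=m}^{n} [(n+1)_k · (-n)_k / (m+2)_k] · [(-k)_m / k!] = (n+1)!/(2n+1) · δ_{n,m}, where δ_{n,m} is the Kronecker delta. -/
open Finset

/-- The Pochhammer symbol (rising factorial) `(a)_k = a (a+1) ⋯ (a+k-1)` for a real `a`. -/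
noncomputable def poch (a : ℝ) (k : ℕ) : ℝ :=
  Polynomial.eval a (ascPochhammer ℝ k)

/-- Alternating sum of `C(N,j) * C(a+j,r)` vanishes when `r < N`. -/
lemma alt_choose_sum (r : ℕ) : ∀ (N a : ℕ), r < N →
    ∑ j ∈ range (N + 1), (-1 : ℤ) ^ j * (N.choose j) * ((a + j).choose r) = 0 := by
  induction r with
  | zero =>
    intro N a hN
    simpa using Int.alternating_sum_range_choose_of_ne (by omega : N ≠ 0)
  | succ r ih =>
    intro N a hN
    obtain ⟨M, rfl⟩ : ∃ M, N = M + 1 := ⟨N - 1, by omega⟩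
    set f : ℕ → ℤ := fun j => ((a + j).choose (r + 1) : ℤ) with hf
    have step : ∑ j ∈ range (M + 2), (-1 : ℤ) ^ j * ((M + 1).choose j) * f j
        = ∑ j ∈ range (M + 1), (-1 : ℤ) ^ j * (M.choose j) * (f j - f (j + 1)) := by
      have h1 : ∑ j ∈ range (M + 2), (-1 : ℤ) ^ j * ((M + 1).choose j) * f j
          = (∑ j ∈ range (M + 1), (-1 : ℤ) ^ (j + 1) * ((M + 1).choose (j + 1)) * f (j + 1))
            + f 0 := by
        rw [Finset.sum_range_succ']; simp
      have h2 : ∑ j ∈ range (M + 2), (-1 : ℤ) ^ j * (M.choose j) * f j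
          = (∑ j ∈ range (M + 1), (-1 : ℤ) ^ (j + 1) * (M.choose (j + 1)) * f (j + 1))
            + f 0 := by
        rw [Finset.sum_range_succ']; simp
      have h3 : ∑ j ∈ range (M + 2), (-1 : ℤ) ^ j * (M.choose j) * f j
          = ∑ j ∈ range (M + 1), (-1 : ℤ) ^ j * (M.choose j) * f j := by
        rw [Finset.sum_range_succ, Nat.choose_succ_self]; simp
      have pascal : ∀ j, ((M + 1).choose (j + 1) : ℤ)
          = (M.choose j : ℤ) + (M.choose (j + 1) : ℤ) := by
        intro j; exact_mod_cast Nat.choose_succ_succ M j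
      have split : ∑ j ∈ range (M + 1), (-1 : ℤ) ^ (j + 1) * ((M + 1).choose (j + 1)) * f (j + 1)
          = (∑ j ∈ range (M + 1), (-1 : ℤ) ^ (j + 1) * (M.choose j) * f (j + 1))
            + ∑ j ∈ range (M + 1), (-1 : ℤ) ^ (j + 1) * (M.choose (j + 1)) * f (j + 1) := by
        rw [← Finset.sum_add_distrib]
        exact Finset.sum_congr rfl fun j _ => by rw [pascal]; ring
      calc ∑ j ∈ range (M + 2), (-1 : ℤ) ^ j * ((M + 1).choose j) * f j
          = (∑ j ∈ range (M + 1), (-1 : ℤ) ^ (j + 1) * (M.choose j) * f (j + 1))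
            + ((∑ j ∈ range (M + 1), (-1 : ℤ) ^ (j + 1) * (M.choose (j + 1)) * f (j + 1))
              + f 0) := by rw [h1, split, add_assoc]
        _ = (∑ j ∈ range (M + 1), (-1 : ℤ) ^ (j + 1) * (M.choose j) * f (j + 1))
            + ∑ j ∈ range (M + 1), (-1 : ℤ) ^ j * (M.choose j) * f j := by rw [← h2, h3]
        _ = ∑ j ∈ range (M + 1), (-1 : ℤ) ^ j * (M.choose j) * (f j - f (j + 1)) := by
            rw [← Finset.sum_add_distrib]
            exact Finset.sum_congr rfl fun j _ => by ring
    have diff : ∀ j, f j - f (j + 1) = -(((a + j).choose r : ℤ)) := by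
      intro j
      have h : ((a + (j + 1)).choose (r + 1) : ℤ)
          = ((a + j).choose r : ℤ) + ((a + j).choose (r + 1) : ℤ) := by
        rw [show a + (j + 1) = (a + j) + 1 by ring]
        exact_mod_cast Nat.choose_succ_succ (a + j) r
      simp only [hf, h]; ring
    rw [step]
    have h4 : ∑ j ∈ range (M + 1), (-1 : ℤ) ^ j * (M.choose j) * (f j - f (j + 1))
        = -∑ j ∈ range (M + 1), (-1 : ℤ) ^ j * (M.choose j) * ((a + j).choose r) := by
      rw [← Finset.sum_neg_distrib]
      exact Finset.sum_congr rfl fun j _ => by rw [diff j]; ring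
    rw [h4, ih M a (by omega), neg_zero]

theorem uncorrelatedness_sum_identity
    (n m : ℕ) (hmn : m ≤ n) :
    ∑ k ∈ Finset.Icc m n,
        (poch ((n : ℝ) + 1) k * poch (-(n : ℝ)) k / poch ((m : ℝ) + 2) k) *
          (poch (-(k : ℝ)) m / (Nat.factorial k : ℝ)) =
      if n = m then (Nat.factorial (n + 1) : ℝ) / (2 * n + 1) else 0 := by
  have nz : ∀ j : ℕ, (Nat.factorial j : ℝ) ≠ 0 := fun j => by
    exact_mod_cast j.factorial_ne_zero
  have hterm : ∀ k ∈ Finset.Icc m n,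
      (poch ((n : ℝ) + 1) k * poch (-(n : ℝ)) k / poch ((m : ℝ) + 2) k) *
          (poch (-(k : ℝ)) m / (Nat.factorial k : ℝ))
      = (-1 : ℝ) ^ (k + m) * (Nat.factorial (m + 1)) * (Nat.factorial (n + k)) /
          ((Nat.factorial (n - k)) * (Nat.factorial (m + 1 + k)) * (Nat.factorial (k - m))) := by
    intro k hk
    rw [Finset.mem_Icc] at hk
    obtain ⟨hmk, hkn⟩ := hk
    have e1 : poch ((n : ℝ) + 1) k = ((n + 1).ascFactorial k : ℝ) := by
      rw [poch, show ((n : ℝ) + 1) = ((n + 1 : ℕ) : ℝ) by push_cast; ring,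
        ← ascPochhammer_eval_cast, ascPochhammer_nat_eq_ascFactorial]
    have e2 : poch (-(n : ℝ)) k = (-1 : ℝ) ^ k * (n.descFactorial k : ℝ) := by
      rw [poch, ascPochhammer_eval_neg_eq_descPochhammer,
        descPochhammer_eval_eq_descFactorial]
    have e3 : poch ((m : ℝ) + 2) k = ((m + 2).ascFactorial k : ℝ) := by
      rw [poch, show ((m : ℝ) + 2) = ((m + 2 : ℕ) : ℝ) by push_cast; ring,
        ← ascPochhammer_eval_cast, ascPochhammer_nat_eq_ascFactorial]
    have e4 : poch (-(k : ℝ)) m = (-1 : ℝ) ^ m * (k.descFactorial m : ℝ) := by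
      rw [poch, ascPochhammer_eval_neg_eq_descPochhammer,
        descPochhammer_eval_eq_descFactorial]
    have g1 : ((n + 1).ascFactorial k : ℝ)
        = (Nat.factorial (n + k) : ℝ) / (Nat.factorial n : ℝ) := by
      rw [eq_div_iff (nz n)]
      have := Nat.factorial_mul_ascFactorial n k
      push_cast [← this]; ring
    have g2 : (n.descFactorial k : ℝ)
        = (Nat.factorial n : ℝ) / (Nat.factorial (n - k) : ℝ) := by
      rw [eq_div_iff (nz (n - k))]
      have := Nat.factorial_mul_descFactorial hkn
      push_cast [← this]; ring
    have g3 : ((m + 2).ascFactorial k : ℝ)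
        = (Nat.factorial (m + 1 + k) : ℝ) / (Nat.factorial (m + 1) : ℝ) := by
      rw [eq_div_iff (nz (m + 1))]
      have := Nat.factorial_mul_ascFactorial (m + 1) k
      push_cast [← this]; ring
    have g4 : (k.descFactorial m : ℝ)
        = (Nat.factorial k : ℝ) / (Nat.factorial (k - m) : ℝ) := by
      rw [eq_div_iff (nz (k - m))]
      have := Nat.factorial_mul_descFactorial hmk
      push_cast [← this]; ring
    rw [e1, e2, e3, e4, g1, g2, g3, g4, pow_add]
    field_simp
  rw [Finset.sum_congr rfl hterm]
  by_cases hnm : n = m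
  · subst hnm
    rw [if_pos rfl, Finset.Icc_self, Finset.sum_singleton]
    have h1 : n - n = 0 := Nat.sub_self n
    have h2 : n + 1 + n = 2 * n + 1 := by ring
    have h3 : Nat.factorial (2 * n + 1) = (2 * n + 1) * Nat.factorial (2 * n) := rfl
    have h4 : (-1 : ℝ) ^ (n + n) = 1 := Even.neg_one_pow ⟨n, rfl⟩
    have h5 : n + n = 2 * n := by ring
    rw [h1, h2, h3, h4, h5, Nat.factorial_zero]
    have h6 : (0:ℝ) < 2 * (n:ℝ) + 1 := by positivity
    have h7 : (0:ℝ) < (Nat.factorial (2 * n) : ℝ) := by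
      exact_mod_cast (2 * n).factorial_pos
    field_simp
    push_cast
    ring
  · -- n > m
    rw [if_neg hnm]
    have hlt : m < n := lt_of_le_of_ne hmn (fun h => hnm h.symm)
    set N := n - m with hN
    have hN1 : 1 ≤ N := by omega
    rw [← Finset.Ico_add_one_right_eq_Icc, Finset.sum_Ico_eq_sum_range,
      show n + 1 - m = N + 1 by omega]
    have key : ∑ j ∈ range (N + 1),
        (-1 : ℝ) ^ j * (N.choose j : ℝ) * ((n + m + j).choose (N - 1) : ℝ) = 0 := by
      have := alt_choose_sum (N - 1) N (n + m) (by omega)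
      exact_mod_cast this
    have hterm2 : ∀ j ∈ range (N + 1),
        (-1 : ℝ) ^ (m + j + m) * (Nat.factorial (m + 1)) * (Nat.factorial (n + (m + j))) /
          ((Nat.factorial (n - (m + j))) * (Nat.factorial (m + 1 + (m + j)))
            * (Nat.factorial (m + j - m)))
        = ((Nat.factorial (m + 1) : ℝ) * (Nat.factorial (N - 1)) / (Nat.factorial N)) *
            ((-1 : ℝ) ^ j * (N.choose j : ℝ) * ((n + m + j).choose (N - 1) : ℝ)) := by
      intro j hj
      rw [Finset.mem_range] at hj
      have hjN : j ≤ N := by omega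
      have hA : (n + (m + j)).choose (N - 1) * Nat.factorial (N - 1)
          * Nat.factorial (m + 1 + (m + j)) = Nat.factorial (n + (m + j)) := by
        have h := Nat.choose_mul_factorial_mul_factorial
          (show N - 1 ≤ n + (m + j) by omega)
        rw [show n + (m + j) - (N - 1) = m + 1 + (m + j) by omega] at h
        exact h
      have hB : N.choose j * Nat.factorial j * Nat.factorial (N - j)
          = Nat.factorial N := Nat.choose_mul_factorial_mul_factorial hjN
      have hsub1 : n - (m + j) = N - j := by omega
      have hsub2 : m + j - m = j := by omega
      have hadd : n + (m + j) = n + m + j := by ring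
      have hsign : (-1 : ℝ) ^ (m + j + m) = (-1 : ℝ) ^ j := by
        rw [show m + j + m = 2 * m + j by ring, pow_add, pow_mul]
        norm_num
      rw [hsub1, hsub2, hsign]
      have hA' : ((Nat.factorial (n + (m + j)) : ℝ))
          = ((n + m + j).choose (N - 1) : ℝ) * (Nat.factorial (N - 1) : ℝ)
            * (Nat.factorial (m + 1 + (m + j)) : ℝ) := by
        rw [← hadd]; exact_mod_cast hA.symm
      have hB' : ((Nat.factorial N : ℝ))
          = (N.choose j : ℝ) * (Nat.factorial j : ℝ) * (Nat.factorial (N - j) : ℝ) := by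
        exact_mod_cast hB.symm
      have c1 : (N.choose j : ℝ) ≠ 0 := by
        exact_mod_cast (Nat.choose_pos hjN).ne'
      rw [hA', hB']
      field_simp [c1]
    rw [Finset.sum_congr rfl hterm2, ← Finset.mul_sum, key, mul_zero]
end

section
/- For all nonnegative integers n, m with m ≤ n and every real r with 2r + 1 > 0 and r ≠ 0, Σ_{k=m}^{n} [(n+2r+1)_k · (-n)_k / (m+2r+2)_k] · [(-k)_m / k!] = n! · (n+2r+1)/(2n+2r+1) · δ_{n,m}. -/
lemma poch_zero (a : ℝ) : poch a 0 = 1 := by simp [poch]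

lemma poch_succ (a : ℝ) (k : ℕ) : poch a (k+1) = poch a k * (a + k) :=
  ascPochhammer_succ_eval k a

lemma poch_succ_left (a : ℝ) (k : ℕ) : poch a (k+1) = a * poch (a+1) k := by
  have := congrArg (Polynomial.eval a) (ascPochhammer_succ_left ℝ k)
  simpa [poch, Polynomial.eval_comp] using this

lemma poch_pos {a : ℝ} (ha : 0 < a) (k : ℕ) : 0 < poch a k :=
  ascPochhammer_pos k a ha

lemma poch_add (a : ℝ) (n m : ℕ) : poch a (n + m) = poch a n * poch (a + n) m := by
  have := congrArg (Polynomial.eval a) (ascPochhammer_mul ℝ n m)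
  simpa [poch, Polynomial.eval_comp] using this.symm

lemma poch_neg_nat (k m : ℕ) : poch (-(k:ℝ)) m = (-1)^m * (k.descFactorial m : ℝ) := by
  rw [poch, ascPochhammer_eval_neg_eq_descPochhammer, descPochhammer_eval_eq_descFactorial]

lemma poch_diff (y : ℝ) (d : ℕ) :
    poch (y+1) (d+1) - poch y (d+1) = (d+1) * poch (y+1) d := by
  rw [poch_succ, poch_succ_left]; ring

lemma pascal_step (N : ℕ) (f : ℕ → ℝ) :
    ∑ j ∈ Finset.range (N+2), (-1:ℝ)^j * ((N+1).choose j) * f j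
      = ∑ j ∈ Finset.range (N+1), (-1:ℝ)^j * (N.choose j) * (f j - f (j+1)) := by
  set g : ℕ → ℝ := fun j => (-1:ℝ)^j * (N.choose j) with hg
  have key : ∀ i, (-1:ℝ)^(i+1) * ((N+1).choose (i+1)) = -g i + g (i+1) := by
    intro i
    simp only [hg, Nat.choose_succ_succ, Nat.cast_add, pow_succ]
    ring
  have hshift : ∑ i ∈ Finset.range (N+1), g (i+1) * f (i+1)
      = ∑ j ∈ Finset.range (N+1), g j * f j - g 0 * f 0 := by
    have h2 : ∑ j ∈ Finset.range (N+2), g j * f j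
        = ∑ i ∈ Finset.range (N+1), g (i+1) * f (i+1) + g 0 * f 0 :=
      Finset.sum_range_succ' _ _
    have h3 : ∑ j ∈ Finset.range (N+2), g j * f j
        = ∑ j ∈ Finset.range (N+1), g j * f j := by
      rw [Finset.sum_range_succ]
      simp [hg, Nat.choose_succ_self]
    linarith
  calc ∑ j ∈ Finset.range (N+2), (-1:ℝ)^j * ((N+1).choose j) * f j
      = ∑ i ∈ Finset.range (N+1), (-1:ℝ)^(i+1) * ((N+1).choose (i+1)) * f (i+1)
          + (-1:ℝ)^0 * ((N+1).choose 0) * f 0 := Finset.sum_range_succ' _ _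
    _ = ∑ i ∈ Finset.range (N+1), (-g i + g (i+1)) * f (i+1) + f 0 := by
        simp only [key]; norm_num
    _ = -∑ i ∈ Finset.range (N+1), g i * f (i+1)
          + ∑ i ∈ Finset.range (N+1), g (i+1) * f (i+1) + f 0 := by
        congr 1
        simp only [add_mul, neg_mul]
        rw [Finset.sum_add_distrib]
        congr 1
        rw [← Finset.sum_neg_distrib]
    _ = ∑ j ∈ Finset.range (N+1), (g j * f j - g j * f (j+1)) := by
        rw [hshift, Finset.sum_sub_distrib]
        have hg0 : g 0 * f 0 = f 0 := by simp [hg]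
        linarith
    _ = ∑ j ∈ Finset.range (N+1), (-1:ℝ)^j * (N.choose j) * (f j - f (j+1)) := by
        exact Finset.sum_congr rfl (fun j _ => by rw [hg]; ring)

lemma fd_zero : ∀ (d N : ℕ), d < N → ∀ (x : ℝ),
    ∑ j ∈ Finset.range (N+1), (-1:ℝ)^j * (N.choose j) * poch (x + j) d = 0 := by
  intro d
  induction d with
  | zero =>
    intro N hN x
    simp only [poch_zero, mul_one]
    have := Int.alternating_sum_range_choose_of_ne (show N ≠ 0 by omega)
    have hc := congrArg (fun z : ℤ => (z : ℝ)) this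
    push_cast at hc
    convert hc using 2 with j
  | succ d ih =>
    intro N hN x
    obtain ⟨M, rfl⟩ : ∃ M, N = M + 1 := ⟨N-1, by omega⟩
    rw [pascal_step]
    have key2 : ∀ j : ℕ, poch (x + (j:ℝ)) (d+1) - poch (x + ((j+1:ℕ):ℝ)) (d+1)
        = -((d+1:ℝ) * poch ((x+1) + j) d) := by
      intro j
      push_cast
      have e1 : x + ((j:ℝ)+1) = (x + (j:ℝ)) + 1 := by ring
      have e2 : x + 1 + (j:ℝ) = (x + (j:ℝ)) + 1 := by ring
      rw [e1, e2]
      linarith [poch_diff (x + (j:ℝ)) d]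
    rw [Finset.sum_congr rfl (fun j _ => by rw [key2 j])]
    have hsum : ∑ j ∈ Finset.range (M+1), (-1:ℝ)^j * (M.choose j) * (-((d+1) * poch ((x+1) + j) d))
        = -((d+1) * ∑ j ∈ Finset.range (M+1), (-1:ℝ)^j * (M.choose j) * poch ((x+1) + j) d) := by
      rw [Finset.mul_sum, ← Finset.sum_neg_distrib]
      exact Finset.sum_congr rfl (fun j _ => by ring)
    rw [hsum, ih M (by omega) (x+1)]
    simp

lemma poch_neg_div_factorial (N j : ℕ) :
    poch (-(N:ℝ)) j / (j.factorial : ℝ) = (-1)^j * (N.choose j) := by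
  rw [poch_neg_nat, Nat.descFactorial_eq_factorial_mul_choose]
  push_cast
  rw [mul_comm (j.factorial : ℝ)]
  field_simp

lemma poch_ratio {b : ℝ} (hb : 0 < b) (M j : ℕ) :
    poch (b + (M+1:ℕ)) j / poch (b+1) j = poch (b+1+j) M / poch (b+1) M := by
  have h1 : poch (b+1) (M + j) = poch (b+1) M * poch (b + (M+1:ℕ)) j := by
    rw [poch_add]
    congr 2
    push_cast; ring
  have h2 : poch (b+1) (M + j) = poch (b+1) j * poch (b+1+j) M := by
    rw [add_comm M j, poch_add]
  have hM := poch_pos (show (0:ℝ) < b+1 by linarith) M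
  have hj := poch_pos (show (0:ℝ) < b+1 by linarith) j
  have e : b + ((M+1:ℕ):ℝ) = b + ↑M + 1 := by push_cast; ring
  rw [e] at h1 ⊢
  field_simp
  linear_combination h2 - h1

lemma cv_zero {b : ℝ} (hb : 0 < b) (M : ℕ) :
    ∑ j ∈ Finset.range (M+2),
      poch (b + (M+1:ℕ)) j * poch (-((M+1:ℕ):ℝ)) j / (poch (b+1) j * (j.factorial : ℝ)) = 0 := by
  have hM := poch_pos (show (0:ℝ) < b+1 by linarith) M
  have key : ∀ j : ℕ, poch (b + (M+1:ℕ)) j * poch (-((M+1:ℕ):ℝ)) j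
      / (poch (b+1) j * (j.factorial : ℝ))
      = ((-1:ℝ)^j * ((M+1).choose j) * poch ((b+1) + j) M) / poch (b+1) M := by
    intro j
    have hj := poch_pos (show (0:ℝ) < b+1 by linarith) j
    have h1 := poch_ratio hb M j
    have h2 := poch_neg_div_factorial (M+1) j
    have hfj : (0:ℝ) < (j.factorial : ℝ) := by positivity
    rw [div_mul_eq_div_div]
    rw [show poch (b + (M+1:ℕ)) j * poch (-((M+1:ℕ):ℝ)) j / poch (b+1) j
        = (poch (b + (M+1:ℕ)) j / poch (b+1) j) * poch (-((M+1:ℕ):ℝ)) j by ring]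
    rw [h1, mul_div_assoc, h2]
    push_cast
    ring
  rw [Finset.sum_congr rfl (fun j _ => key j)]
  rw [← Finset.sum_div]
  have := fd_zero M (M+1) (by omega) (b+1)
  rw [show M + 1 + 1 = M + 2 by ring] at this
  rw [this, zero_div]

lemma key_ratio (m j : ℕ) :
    poch (-((m+j:ℕ):ℝ)) m / ((m+j).factorial : ℝ) = (-1:ℝ)^m / (j.factorial : ℝ) := by
  rw [poch_neg_nat]
  have hD := Nat.factorial_mul_descFactorial (Nat.le_add_right m j)
  rw [Nat.add_sub_cancel_left] at hD
  have h1 : (0:ℝ) < ((m+j).factorial : ℝ) := by positivity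
  have h2 : (0:ℝ) < (j.factorial : ℝ) := by positivity
  field_simp
  have hDc := congrArg (Nat.cast : ℕ → ℝ) hD
  push_cast at hDc
  linear_combination hDc

theorem uncorrelatedness_sum_identity_general
    (n m : ℕ) (hmn : m ≤ n) (r : ℝ) (hr : 0 < 2 * r + 1) (hr0 : r ≠ 0) :
    ∑ k ∈ Finset.Icc m n,
        (poch ((n : ℝ) + 2 * r + 1) k * poch (-(n : ℝ)) k /
            poch ((m : ℝ) + 2 * r + 2) k) *
          (poch (-(k : ℝ)) m / (Nat.factorial k : ℝ)) =
      if n = m then (Nat.factorial n : ℝ) * ((n : ℝ) + 2 * r + 1) / (2 * n + 2 * r + 1)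
      else 0 := by
  by_cases hnm : n = m
  · subst hnm
    rw [if_pos rfl, Finset.Icc_self, Finset.sum_singleton]
    set A : ℝ := (n:ℝ) + 2*r + 1 with hA
    have hApos : 0 < A := by
      have : (0:ℝ) ≤ (n:ℝ) := Nat.cast_nonneg n
      rw [hA]; linarith
    have hAn : 0 < A + n := by
      have : (0:ℝ) ≤ (n:ℝ) := Nat.cast_nonneg n
      rw [hA]; linarith
    have hC : (n:ℝ) + 2*r + 2 = A + 1 := by rw [hA]; ring
    have hrel : A * poch (A+1) n = poch A n * (A + n) := by
      rw [← poch_succ_left, poch_succ]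
    have hneg : poch (-(n:ℝ)) n = (-1:ℝ)^n * (n.factorial : ℝ) := by
      rw [poch_neg_nat, Nat.descFactorial_self]
    have hpos : 0 < poch (A+1) n := poch_pos (by linarith) n
    have hfac : (0:ℝ) < (n.factorial : ℝ) := by positivity
    have hsq : ((-1:ℝ)^n) * ((-1:ℝ)^n) = 1 := by
      rw [← pow_add]; exact Even.neg_one_pow ⟨n, rfl⟩
    rw [hC, hneg]
    have h2n : 2*(n:ℝ) + 2*r + 1 = A + n := by rw [hA]; ring
    rw [h2n]
    field_simp
    linear_combination poch A n * (A + ↑n) * hsq - hrel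
  · rw [if_neg hnm]
    obtain ⟨M, rfl⟩ : ∃ M, n = m + (M+1) := ⟨n - m - 1, by omega⟩
    set b : ℝ := 2*(m:ℝ) + 2*r + 1 with hb
    have hbpos : 0 < b := by
      have : (0:ℝ) ≤ (m:ℝ) := Nat.cast_nonneg m
      rw [hb]; linarith
    rw [← Finset.Ico_add_one_right_eq_Icc, Finset.sum_Ico_eq_sum_range]
    have hcard : m + (M+1) + 1 - m = M + 2 := by omega
    rw [hcard]
    set K : ℝ := poch ((m + (M+1) : ℕ) + 2*r + 1) m * poch (-((m + (M+1):ℕ)):ℝ) m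
        / poch ((m:ℝ) + 2*r + 2) m * (-1:ℝ)^m with hK
    have hterm : ∀ j ∈ Finset.range (M+2),
        (poch (((m + (M+1):ℕ) : ℝ) + 2 * r + 1) (m+j) * poch (-((m + (M+1):ℕ) : ℝ)) (m+j) /
            poch ((m : ℝ) + 2 * r + 2) (m+j)) *
          (poch (-((m+j : ℕ) : ℝ)) m / (Nat.factorial (m+j) : ℝ))
        = K * (poch (b + (M+1:ℕ)) j * poch (-((M+1:ℕ):ℝ)) j
            / (poch (b+1) j * (j.factorial : ℝ))) := by
      intro j _
      rw [poch_add (((m + (M+1):ℕ) : ℝ) + 2 * r + 1) m j,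
          poch_add (-((m + (M+1):ℕ) : ℝ)) m j,
          poch_add ((m : ℝ) + 2 * r + 2) m j, key_ratio]
      have e1 : ((m + (M+1):ℕ) : ℝ) + 2 * r + 1 + (m:ℝ) = b + ((M+1:ℕ):ℝ) := by
        rw [hb]; push_cast; ring
      have e2 : -((m + (M+1):ℕ) : ℝ) + (m:ℝ) = -((M+1:ℕ):ℝ) := by push_cast; ring
      have e3 : (m : ℝ) + 2 * r + 2 + (m:ℝ) = b + 1 := by rw [hb]; push_cast; ring
      rw [e1, e2, e3, hK]
      have hp1 : (0:ℝ) < poch ((m : ℝ) + 2*r + 2) m := by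
        apply poch_pos
        have : (0:ℝ) ≤ (m:ℝ) := Nat.cast_nonneg m
        linarith
      have hp2 : (0:ℝ) < poch (b+1) j := poch_pos (by linarith) j
      have hp3 : (0:ℝ) < (j.factorial : ℝ) := by positivity
      field_simp
    rw [Finset.sum_congr rfl hterm, ← Finset.mul_sum, cv_zero hbpos M, mul_zero]
end
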